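/- Let x_1,...,x_d be vectors in a Hilbert space with positive definite Gram matrix. For distinct i, j and S ⊆ [d]\{i,j}: P_i (I − P_S) P_j = 0 if and only if [β_j(S∪{i})]_i = 0, where β_j(T) denotes the coefficients of the projection of x_j onto span{x_k : k ∈ T}. -/

import Mathlib

/-!
Write `K` for the span of `x '' S` and `Q = 1 - P_S` for the projection onto `Kᗮ`. Since `P_i` and
`P_j` are rank-one projections, `P_i Q P_j = 0` exactly when `⟪x_i, Q x_j⟫ = 0`. Decompose
`x_j = β_i x_i + w + r` with `w ∈ K` and `r ⟂ span (x '' (S ∪ {i}))`; then `Q` kills `w` and fixes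
`r ⟂ x_i`, so `⟪x_i, Q x_j⟫ = β_i ‖Q x_i‖²`. Finally `Q x_i ≠ 0` because the `x_k` are linearly
independent (the Gram matrix is positive definite), so `x_i ∉ K`.
-/

open Submodule
open scoped InnerProductSpace

section

variable {𝕜 E : Type*} [RCLike 𝕜] [NormedAddCommGroup E] [InnerProductSpace 𝕜 E]

theorem IsStarProjection.eq_starProjection_of_range_eq [CompleteSpace E] {p : E →L[𝕜] E}
    (hp : IsStarProjection p) {K : Submodule 𝕜 E} [K.HasOrthogonalProjection]
    (hK : LinearMap.range (p : E →ₗ[𝕜] E) = K) : p = K.starProjection := by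
  obtain ⟨_, hp⟩ := isStarProjection_iff_eq_starProjection_range.mp hp
  subst hK
  exact hp

theorem starProjection_singleton_mul_mul_starProjection_singleton_eq_zero_iff
    (u v : E) (T : E →L[𝕜] E) :
    (𝕜 ∙ u).starProjection * T * (𝕜 ∙ v).starProjection = 0 ↔ ⟪u, T v⟫_𝕜 = 0 := by
  have hker (w : E) : (𝕜 ∙ u).starProjection w = 0 ↔ ⟪u, w⟫_𝕜 = 0 := by
    rw [starProjection_apply_eq_zero_iff, mem_orthogonal_singleton_iff_inner_right]
  constructor
  · intro h
    rw [← hker]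
    simpa [starProjection_eq_self_iff.mpr (mem_span_singleton_self v)] using congr($h v)
  · intro h
    ext y
    obtain ⟨t, ht⟩ := mem_span_singleton.mp (starProjection_apply_mem (𝕜 ∙ v) y)
    simp [← ht, (hker _).mpr h]

section Decomposition

variable {K : Submodule 𝕜 E} [K.HasOrthogonalProjection] {u v w r : E} {a : 𝕜}

theorem inner_starProjection_orthogonal_eq_of_eq_add (hw : w ∈ K) (hr : r ∈ (𝕜 ∙ u ⊔ K)ᗮ)
    (hv : v = a • u + w + r) :
    ⟪u, Kᗮ.starProjection v⟫_𝕜 = a * (‖Kᗮ.starProjection u‖ : 𝕜) ^ 2 := by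
  have hrK : r ∈ Kᗮ := orthogonal_le le_sup_right hr
  have hru : ⟪u, r⟫_𝕜 = 0 :=
    mem_orthogonal_singleton_iff_inner_right.mp (orthogonal_le le_sup_left hr)
  have hnormSq : ⟪u, Kᗮ.starProjection u⟫_𝕜 = (‖Kᗮ.starProjection u‖ : 𝕜) ^ 2 := by
    rw [← inner_self_eq_norm_sq_to_K, inner_starProjection_left_eq_right,
      starProjection_eq_self_iff.mpr (starProjection_apply_mem _ u)]
  rw [hv, map_add, map_add, map_smul, starProjection_orthogonal_apply_eq_zero hw,
    starProjection_eq_self_iff.mpr hrK, inner_add_right, inner_add_right, inner_smul_right, hnormSq,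
    hru, inner_zero_right, add_zero, add_zero]

theorem starProjection_singleton_mul_orthogonal_mul_eq_zero_iff (hu : u ∉ K) (hw : w ∈ K)
    (hr : r ∈ (𝕜 ∙ u ⊔ K)ᗮ) (hv : v = a • u + w + r) :
    (𝕜 ∙ u).starProjection * Kᗮ.starProjection * (𝕜 ∙ v).starProjection = 0 ↔ a = 0 := by
  have hQu : Kᗮ.starProjection u ≠ 0 := by
    rwa [Ne, starProjection_apply_eq_zero_iff, orthogonal_orthogonal]
  rw [starProjection_singleton_mul_mul_starProjection_singleton_eq_zero_iff,
    inner_starProjection_orthogonal_eq_of_eq_add hw hr hv]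
  simp [hQu, -starProjection_orthogonal_val]

end Decomposition

end

theorem stmt_13_general {H : Type*} [NormedAddCommGroup H] [InnerProductSpace ℝ H] [CompleteSpace H]
    {d : ℕ} (x : Fin d → H)
    (hGram : (Matrix.of fun (i j : Fin d) => (inner ℝ (x i) (x j) : ℝ)).PosDef)
    (P : Finset (Fin d) → H →L[ℝ] H)
    (hsa : ∀ A, IsSelfAdjoint (P A))
    (hidem : ∀ A, P A * P A = P A)
    (hrange : ∀ A : Finset (Fin d), LinearMap.range (P A : H →ₗ[ℝ] H) = Submodule.span ℝ (x '' ↑A))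
    (i j : Fin d) (S : Finset (Fin d)) (hiS : i ∉ S)
    (β : Fin d → ℝ)
    (hβ : P (insert i S) (x j) = ∑ k ∈ insert i S, β k • x k) :
    P {i} * (1 - P S) * P {j} = 0 ↔ β i = 0 := by
  have _ (A : Finset (Fin d)) : FiniteDimensional ℝ (span ℝ (x '' A)) :=
    FiniteDimensional.span_of_finite ℝ (A.finite_toSet.image x)
  have hP (A : Finset (Fin d)) : P A = (span ℝ (x '' A)).starProjection :=
    IsStarProjection.eq_starProjection_of_range_eq ⟨hidem A, hsa A⟩ (hrange A)
  have hxi : x i ∉ span ℝ (x '' S) :=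
    (Matrix.linearIndependent_of_posDef_gram hGram).notMem_span_image hiS
  have hspan : span ℝ (x '' ↑(insert i S)) = ℝ ∙ x i ⊔ span ℝ (x '' S) := by
    rw [Finset.coe_insert, Set.image_insert_eq, span_insert]
  rw [hP, hP, hP, ← starProjection_orthogonal']
  simp only [Finset.coe_singleton, Set.image_singleton]
  refine starProjection_singleton_mul_orthogonal_mul_eq_zero_iff hxi
    (w := ∑ k ∈ S, β k • x k) (r := x j - P (insert i S) (x j)) ?_ ?_ ?_
  · exact sum_mem fun k hk => smul_mem _ _ (subset_span (Set.mem_image_of_mem x hk))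
  · rw [← hspan, hP]
    exact sub_starProjection_mem_orthogonal _
  · rw [hβ, Finset.sum_insert hiS]
    abel

theorem stmt_13 {H : Type*} [NormedAddCommGroup H] [InnerProductSpace ℝ H] [CompleteSpace H]
    {d : ℕ} (x : Fin d → H)
    (hGram : (Matrix.of fun (i j : Fin d) => (inner ℝ (x i) (x j) : ℝ)).PosDef)
    (P : Finset (Fin d) → H →L[ℝ] H)
    (hsa : ∀ A, IsSelfAdjoint (P A))
    (hidem : ∀ A, P A * P A = P A)
    (hrange : ∀ A : Finset (Fin d), LinearMap.range (P A : H →ₗ[ℝ] H) = Submodule.span ℝ (x '' ↑A))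
    (i j : Fin d) (hij : i ≠ j) (S : Finset (Fin d)) (hiS : i ∉ S) (hjS : j ∉ S)
    (β : Fin d → ℝ) (hsupp : ∀ k, β k ≠ 0 → k ∈ insert i S)
    (hβ : P (insert i S) (x j) = ∑ k ∈ insert i S, β k • x k) :
    P {i} * (1 - P S) * P {j} = 0 ↔ β i = 0 :=
  stmt_13_general x hGram P hsa hidem hrange i j S hiS β hβ
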